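/- arXiv:1112.2312 — 4 statements merged into one kernel-verified Lean document; each statement's English description precedes it below -/
import Mathlib

section
/- If P is a graded poset with finite principal ideals equipped with a rayless Morse matching M, then for every x ∈ P the digraph D_M(x) is acyclic and finite. -/
/-- A directed simple path of length `n` in the digraph with arrow relation `A`:
a sequence `p 0, …, p n` of pairwise distinct vertices with an arrow from each
vertex to the next. -/
def IsPathOn {V : Type*} (A : V → V → Prop) (n : ℕ) (p : ℕ → V) : Prop :=
  (∀ i j, i ≤ n → j ≤ n → p i = p j → i = j) ∧ ∀ i, i < n → A (p i) (p (i + 1))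

/-- A digraph is acyclic if no directed simple path can be closed up by an arrow
from its last vertex to its first. -/
def DAcyclic {V : Type*} (A : V → V → Prop) : Prop :=
  ¬ ∃ (n : ℕ) (p : ℕ → V), IsPathOn A n p ∧ A (p n) (p 0)

/-- A (directed) ray: pairwise distinct vertices `r 0, r 1, …` with an arrow from
`r i` to `r (i+1)` for every `i`. -/
def IsRay {V : Type*} (A : V → V → Prop) (r : ℕ → V) : Prop :=
  Function.Injective r ∧ ∀ i : ℕ, A (r i) (r (i + 1))

/-- A digraph is rayless if it contains no ray. -/
def Rayless {V : Type*} (A : V → V → Prop) : Prop := ¬ ∃ r : ℕ → V, IsRay A r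

/-- Two rays are equivalent if they coincide from some point on. -/
def RayEquiv {V : Type*} (r s : ℕ → V) : Prop :=
  ∃ M N : ℕ, ∀ i : ℕ, r (M + i) = s (N + i)

/-- The ray `r` has a bypass starting at `r n`: a directed simple path, not
contained in `r`, from `r n` to `r (n + k)` for some `k > 0`. -/
def HasBypassAt {V : Type*} (A : V → V → Prop) (r : ℕ → V) (n : ℕ) : Prop :=
  ∃ k : ℕ, 0 < k ∧ ∃ (m : ℕ) (p : ℕ → V), IsPathOn A m p ∧ p 0 = r n ∧
    p m = r (n + k) ∧ ∃ i ≤ m, ∀ j : ℕ, p i ≠ r j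

/-- A multiray: a ray having bypasses starting arbitrarily far along it. -/
def IsMultiray {V : Type*} (A : V → V → Prop) (r : ℕ → V) : Prop :=
  IsRay A r ∧ ∀ N : ℕ, ∃ i : ℕ, HasBypassAt A r (N + i)

/-- The family of equivalence classes of rays of the digraph `A`. -/
def RayClasses {V : Type*} (A : V → V → Prop) : Set (Set (ℕ → V)) :=
  {C | ∃ r : ℕ → V, IsRay A r ∧ C = {s | IsRay A s ∧ RayEquiv r s}}

section Poset

variable {P : Type*} [PartialOrder P]

/-- A chain contained in the principal ideal `x↓`. -/
def IsChainIn (x : P) (C : Set P) : Prop := C ⊆ Set.Iic x ∧ IsChain (· ≤ ·) C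

/-- A maximal chain in the principal ideal `x↓`. -/
def IsMaxChainIn (x : P) (C : Set P) : Prop :=
  IsChainIn x C ∧ ∀ D : Set P, IsChainIn x D → C ⊆ D → C = D

/-- `P` is graded with degree function `deg`: for every `x`, every maximal chain
in `x↓` is finite of length `deg x` (i.e. cardinality `deg x + 1`). -/
def GradedDeg (deg : P → ℕ) : Prop :=
  ∀ x : P, ∀ C : Set P, IsMaxChainIn x C → C.Finite ∧ C.ncard = deg x + 1

/-- A matching on the Hasse diagram of `P`: a set of arrows `(x, y)` (where `x`
covers `y`) no two of which share a vertex. -/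
def IsMatching (M : Set (P × P)) : Prop :=
  (∀ e ∈ M, e.2 ⋖ e.1) ∧
  ∀ e ∈ M, ∀ f ∈ M, e ≠ f → e.1 ≠ f.1 ∧ e.1 ≠ f.2 ∧ e.2 ≠ f.1 ∧ e.2 ≠ f.2

/-- The arrow relation of the digraph `H_M(P)`, obtained from the Hasse diagram
of `P` by reversing the arrows belonging to `M`. -/
def HasseM (M : Set (P × P)) (x y : P) : Prop :=
  (y ⋖ x ∧ (x, y) ∉ M) ∨ (y, x) ∈ M

/-- A Morse matching: a matching `M` on the Hasse diagram such that `H_M(P)` is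
acyclic. -/
def IsMorse (M : Set (P × P)) : Prop := IsMatching M ∧ DAcyclic (HasseM M)

/-- An element is critical for `M` if it is matched with no other element. -/
def Critical (M : Set (P × P)) (x : P) : Prop := ∀ e ∈ M, e.1 ≠ x ∧ e.2 ≠ x

/-- The set of critical elements of the matching `M`. -/
def Crit (M : Set (P × P)) : Set P := {x | Critical M x}

/-- The degree of a ray `r`: the minimal degree of an element appearing on `r`. -/
noncomputable def rayDeg (deg : P → ℕ) (r : ℕ → P) : ℕ := sInf {i | ∃ j : ℕ, deg (r j) = i}

/-- `M₊(x)`: if `x` is matched with an element `z` of degree `deg x + 1`, the set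
of elements `y ≠ x` covered by `z`; otherwise empty. -/
def Mplus (M : Set (P × P)) (deg : P → ℕ) (x : P) : Set P :=
  {y | ∃ z : P, (z, x) ∈ M ∧ deg z = deg x + 1 ∧ y ≠ x ∧ y ⋖ z}

/-- The stages `Dₖ(x)` of the construction of `D_M(x)`. -/
def Dk (M : Set (P × P)) (deg : P → ℕ) (x : P) : ℕ → Set P
  | 0 => {x}
  | (k + 1) => Dk M deg x k ∪ ⋃ y ∈ Dk M deg x k, Mplus M deg y

/-- The vertex set of the digraph `D_M(x)`. -/
def Dset (M : Set (P × P)) (deg : P → ℕ) (x : P) : Set P := ⋃ k : ℕ, Dk M deg x k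

/-- The arrow relation of the digraph `D_M(x)`: an arrow from `y` to each element
of `M₊(y)`. -/
def DArrow (M : Set (P × P)) (deg : P → ℕ) (x : P) (y z : P) : Prop :=
  y ∈ Dset M deg x ∧ z ∈ Mplus M deg y

/-- `L_M(x)`: the length of the longest directed simple path in `D_M(x)`. -/
noncomputable def LM (M : Set (P × P)) (deg : P → ℕ) (x : P) : ℕ :=
  sSup {n | ∃ p : ℕ → P, IsPathOn (DArrow M deg x) n p ∧ ∀ i ≤ n, p i ∈ Dset M deg x}

end Poset

/-!
A Morse matching step `y → z ∈ M₊(y)` is the composite of two arrows of `H_M(P)`: up the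
matched arrow from `y` to its partner `w`, then down the unmatched arrow from `w` to `z`. So a
cycle of `D_M(x)` doubles to a closed walk of `H_M(P)`, and an infinite walk of `D_M(x)` doubles
to an infinite walk of `H_M(P)`, which acyclicity forces to be a ray. Finiteness then follows by
Kőnig's lemma, since each `M₊(y)` lies in the finite ideal of the partner of `y`.
-/

open Relation

section Digraph

variable {V : Type*} {A B : V → V → Prop}

theorem DAcyclic.injective_of_walk (hA : DAcyclic A) {s : ℕ → V}
    (hs : ∀ i, A (s i) (s (i + 1))) : Function.Injective s := by
  by_contra hninj
  have hrep : ∃ d, 0 < d ∧ ∃ i, s (i + d) = s i := by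
    obtain ⟨a, b, hab, hne⟩ := Function.not_injective_iff.mp hninj
    rcases hne.lt_or_gt with h | h
    · exact ⟨b - a, by omega, a, by rw [Nat.add_sub_cancel' h.le, hab]⟩
    · exact ⟨a - b, by omega, b, by rw [Nat.add_sub_cancel' h.le, hab]⟩
  classical
  -- a repetition at minimal distance `d` bounds a cycle of length `d`
  obtain ⟨hd, i, hi⟩ := Nat.find_spec hrep
  have hmin : ∀ a b, a < b → b < Nat.find hrep → s (i + a) ≠ s (i + b) :=
    fun a b hab hb he => Nat.find_min hrep (by omega : b - a < Nat.find hrep)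
      ⟨by omega, i + a, by rw [show i + a + (b - a) = i + b by omega, he]⟩
  refine hA ⟨Nat.find hrep - 1, fun t => s (i + t),
    ⟨fun a b ha hb hab => ?_, fun t _ => hs (i + t)⟩, ?_⟩
  · rcases lt_trichotomy a b with h | h | h
    · exact absurd hab (hmin a b h (by omega))
    · exact h
    · exact absurd hab.symm (hmin b a h (by omega))
  · have hstep := hs (i + (Nat.find hrep - 1))
    rwa [show i + (Nat.find hrep - 1) + 1 = i + Nat.find hrep by omega, hi] at hstep

theorem exists_doubled_walk (hBA : Subrelation B (Comp A A)) {s : ℕ → V}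
    (hs : ∀ i, B (s i) (s (i + 1))) :
    ∃ t : ℕ → V, (∀ i, A (t i) (t (i + 1))) ∧ ∀ i, t (2 * i) = s i := by
  choose c hc₁ hc₂ using fun i => hBA (hs i)
  refine ⟨fun n => if n % 2 = 0 then s (n / 2) else c (n / 2), fun n => ?_, fun i => by simp⟩
  obtain ⟨k, rfl | rfl⟩ := Nat.even_or_odd' n
  · simpa [Nat.mul_add_mod, Nat.mul_add_div] using hc₁ k
  · have h2 : 2 * k + 1 + 1 = 2 * (k + 1) := by ring
    simpa [Nat.mul_add_mod, Nat.mul_add_div, h2] using hc₂ k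

theorem DAcyclic.of_subrelation_comp (hA : DAcyclic A) (hBA : Subrelation B (Comp A A)) :
    DAcyclic B := by
  rintro ⟨n, p, ⟨-, hp⟩, hclose⟩
  have hs : ∀ i, B (p (i % (n + 1))) (p ((i + 1) % (n + 1))) := by
    intro i
    rw [← Nat.mod_add_mod]
    rcases (Nat.lt_add_one_iff.mp (Nat.mod_lt i (by omega : 0 < n + 1))).lt_or_eq with h | h
    · rw [Nat.mod_eq_of_lt (by omega : i % (n + 1) + 1 < n + 1)]
      exact hp _ h
    · rw [h, Nat.mod_self]
      exact hclose
  obtain ⟨t, ht, hts⟩ := exists_doubled_walk hBA hs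
  have := hA.injective_of_walk ht (a₁ := 2 * 0) (a₂ := 2 * (n + 1))
    (by rw [hts, hts, Nat.zero_mod, Nat.mod_self])
  omega

theorem Rayless.not_walk_of_subrelation_comp (hR : Rayless A) (hA : DAcyclic A)
    (hBA : Subrelation B (Comp A A)) : ¬ ∃ s : ℕ → V, ∀ i, B (s i) (s (i + 1)) := by
  rintro ⟨s, hs⟩
  obtain ⟨t, ht, -⟩ := exists_doubled_walk hBA hs
  exact hR ⟨t, hA.injective_of_walk ht, ht⟩

theorem finite_setOf_reflTransGen (hB : ∀ a, {b | B a b}.Finite)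
    (hwalk : ¬ ∃ s : ℕ → V, ∀ i, B (s i) (s (i + 1))) (x : V) :
    {y | ReflTransGen B x y}.Finite := by
  have hsucc : ∀ a, {y | ReflTransGen B a y}.Infinite →
      ∃ b, B a b ∧ {y | ReflTransGen B b y}.Infinite := by
    intro a ha
    by_contra! hfin
    refine ha (((Set.finite_singleton a).union ((hB a).biUnion hfin)).subset fun y hy => ?_)
    rcases hy.cases_head with rfl | ⟨b, hab, hby⟩
    · exact Or.inl rfl
    · exact Or.inr (Set.mem_biUnion hab hby)
  by_contra hx
  choose g hg₁ hg₂ using hsucc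
  let s : ℕ → {a // {y | ReflTransGen B a y}.Infinite} :=
    fun n => Nat.rec ⟨x, hx⟩ (fun _ a => ⟨g a.1 a.2, hg₂ a.1 a.2⟩) n
  exact hwalk ⟨fun n => (s n).1, fun n => hg₁ _ _⟩

end Digraph

section Poset

variable {P : Type*} [PartialOrder P] {M : Set (P × P)} {deg : P → ℕ}

theorem IsMatching.fst_eq_of_mem (hM : IsMatching M) {z z' a : P} (h : (z, a) ∈ M)
    (h' : (z', a) ∈ M) : z = z' := by
  by_contra hne
  exact (hM.2 _ h _ h' fun he => hne (congrArg Prod.fst he)).2.2.2 rfl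

theorem IsMatching.snd_eq_of_mem (hM : IsMatching M) {z a a' : P} (h : (z, a) ∈ M)
    (h' : (z, a') ∈ M) : a = a' := by
  by_contra hne
  exact (hM.2 _ h _ h' fun he => hne (congrArg Prod.snd he)).1 rfl

theorem Mplus_finite (hfin : ∀ x : P, (Set.Iic x).Finite) (hM : IsMatching M) (y : P) :
    (Mplus M deg y).Finite := by
  rcases (Mplus M deg y).eq_empty_or_nonempty with h | ⟨-, z, hz, -⟩
  · exact h ▸ Set.finite_empty
  · refine (hfin z).subset ?_
    rintro w ⟨z', hz', -, -, hw⟩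
    exact hM.fst_eq_of_mem hz' hz ▸ hw.le

theorem Mplus_subrelation_comp (hM : IsMatching M) :
    Subrelation (fun y z => z ∈ Mplus M deg y) (Comp (HasseM M) (HasseM M)) := by
  rintro y w ⟨z, hz, -, hwy, hwz⟩
  exact ⟨z, Or.inr hz, Or.inl ⟨hwz, fun hw => hwy (hM.snd_eq_of_mem hw hz)⟩⟩

theorem Dset_eq_setOf_reflTransGen (x : P) :
    Dset M deg x = {y | ReflTransGen (fun y z => z ∈ Mplus M deg y) x y} := by
  ext y
  constructor
  · rintro ⟨-, ⟨k, rfl⟩, hy⟩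
    induction k generalizing y with
    | zero => exact hy ▸ ReflTransGen.refl
    | succ k ih =>
      rcases hy with hy | hy
      · exact ih y hy
      · obtain ⟨w, hw, hyw⟩ := Set.mem_iUnion₂.mp hy
        exact (ih w hw).tail hyw
  · intro hy
    induction hy with
    | refl => exact Set.mem_iUnion.mpr ⟨0, rfl⟩
    | tail _ hwz ih =>
      obtain ⟨k, hk⟩ := Set.mem_iUnion.mp ih
      exact Set.mem_iUnion.mpr ⟨k + 1, Or.inr (Set.mem_biUnion hk hwz)⟩

end Poset

theorem stmt0_general {P : Type*} [PartialOrder P] (deg : P → ℕ) (M : Set (P × P))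
    (hfin : ∀ x : P, (Set.Iic x).Finite)
    (hM : IsMorse M) (hrayless : Rayless (HasseM M)) (x : P) :
    DAcyclic (DArrow M deg x) ∧ (Dset M deg x).Finite := by
  obtain ⟨hmatch, hacyclic⟩ := hM
  have hcomp : Subrelation (fun y z => z ∈ Mplus M deg y) (Comp (HasseM M) (HasseM M)) :=
    Mplus_subrelation_comp hmatch
  refine ⟨hacyclic.of_subrelation_comp fun h => hcomp h.2, ?_⟩
  rw [Dset_eq_setOf_reflTransGen]
  exact finite_setOf_reflTransGen (Mplus_finite hfin hmatch)
    (hrayless.not_walk_of_subrelation_comp hacyclic hcomp) x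

/-- If `P` is a graded poset with finite principal ideals equipped
with a rayless Morse matching `M`, then for every `x ∈ P` the digraph `D_M(x)`
is acyclic and finite. -/
theorem stmt0 {P : Type*} [PartialOrder P] (deg : P → ℕ) (M : Set (P × P))
    (hgraded : GradedDeg deg) (hfin : ∀ x : P, (Set.Iic x).Finite)
    (hM : IsMorse M) (hrayless : Rayless (HasseM M)) (x : P) :
    DAcyclic (DArrow M deg x) ∧ (Dset M deg x).Finite :=
  stmt0_general deg M hfin hM hrayless x
end

section
/- If an acyclic digraph D contains a multiray, then the set of equivalence classes of rays in D has cardinality at least 2^ℵ₀ (the cardinality of the continuum). -/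
/-!
In an acyclic digraph every bypass of a ray `r` contains a *jump*: a path leaving `r` at some
`r s` and rejoining it at a later `r t` (rejoining at an earlier vertex would close a cycle).
A multiray has bypasses arbitrarily far out, hence a sequence of jumps `J 0, J 1, …` each
returning before the next one starts. For `S ⊆ ℕ`, following `r` and taking exactly the jumps
`J l` with `l ∈ S` is an infinite walk, hence a ray, since the digraph is acyclic. Again by
acyclicity, the first vertex off `r` of a jump lies on no other jump, so the rays for `S` and `T`
are inequivalent whenever `S \ T` is infinite; there are continuum many subsets of `ℕ` pairwise
differing infinitely often.
-/

open Relation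

section Acyclic

variable {V : Type*} {A : V → V → Prop}

theorem reflTransGen_of_walk {n : ℕ} {w : ℕ → V} (hw : ∀ i < n, A (w i) (w (i + 1)))
    {a b : ℕ} (hab : a ≤ b) (hbn : b ≤ n) : ReflTransGen A (w a) (w b) :=
  ReflTransGen.lift w (fun _ _ h => h) _ _ <|
    reflTransGen_of_succ_of_le (fun i j => A (w i) (w j))
      (fun i hi => hw i (by simp only [Set.mem_Ico] at hi; omega)) hab

theorem transGen_of_walk {n : ℕ} {w : ℕ → V} (hw : ∀ i < n, A (w i) (w (i + 1)))
    {a b : ℕ} (hab : a < b) (hbn : b ≤ n) : TransGen A (w a) (w b) :=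
  (TransGen.single (hw a (by omega))).trans_left (reflTransGen_of_walk hw hab hbn)

theorem exists_walk_of_transGen {x y : V} (h : TransGen A x y) :
    ∃ n, 0 < n ∧ ∃ w : ℕ → V, w 0 = x ∧ w n = y ∧ ∀ i < n, A (w i) (w (i + 1)) := by
  induction h with
  | single hxy =>
    exact ⟨1, one_pos, fun i => if i = 0 then x else _, rfl, rfl,
      fun i hi => by simpa [show i = 0 by omega] using hxy⟩
  | @tail b c _ hbc ih =>
    obtain ⟨n, hn, w, hw0, hwn, hw⟩ := ih
    refine ⟨n + 1, n.succ_pos, fun i => if i ≤ n then w i else c, by simp [hw0], by simp,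
      fun i hi => ?_⟩
    rcases Nat.lt_or_ge i n with hin | hin
    · simpa [hin.le, Nat.succ_le_of_lt hin] using hw i hin
    · simpa [show i = n by omega, hwn] using hbc

theorem DAcyclic.walk_end_ne_start (hA : DAcyclic A) {n : ℕ} (hn : 0 < n) {w : ℕ → V}
    (hw : ∀ i < n, A (w i) (w (i + 1))) : w n ≠ w 0 := by
  induction n using Nat.strong_induction_on generalizing w with
  | _ n ih =>
  intro hclosed
  by_cases hinj : ∀ i j, i ≤ n - 1 → j ≤ n - 1 → w i = w j → i = j
  · refine hA ⟨n - 1, w, ⟨hinj, fun i hi => hw i (by omega)⟩, ?_⟩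
    simpa [Nat.sub_add_cancel hn, hclosed] using hw (n - 1) (by omega)
  · -- a repeated vertex cuts out a shorter closed walk
    push Not at hinj
    obtain ⟨i, j, hi, hj, hij, hne⟩ := hinj
    wlog hlt : i < j generalizing i j
    · exact this j i hj hi hij.symm hne.symm (by omega)
    refine ih (j - i) (by omega) (by omega) (w := fun t => w (i + t))
      (fun t ht => hw (i + t) (by omega)) ?_
    simpa [Nat.add_sub_cancel' hlt.le] using hij.symm

theorem DAcyclic.not_transGen_self (hA : DAcyclic A) (x : V) : ¬ TransGen A x x := fun h => by
  obtain ⟨n, hn, w, hw0, hwn, hw⟩ := exists_walk_of_transGen h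
  exact hA.walk_end_ne_start hn hw (hwn.trans hw0.symm)

theorem DAcyclic.isRay (hA : DAcyclic A) {w : ℕ → V} (hw : ∀ i, A (w i) (w (i + 1))) :
    IsRay A w := by
  refine ⟨fun i j hij => ?_, hw⟩
  by_contra hne
  wlog hlt : i < j generalizing i j
  · exact this j i hij.symm (Ne.symm hne) (by omega)
  exact hA.not_transGen_self _ (hij ▸ transGen_of_walk (fun k _ => hw k) hlt le_rfl)

end Acyclic

section Concat

variable {V : Type*} (len : ℕ → ℕ) (W : ℕ → ℕ → V)

/-- Finite walks `W k` of lengths `len k` laid end to end: position `(k, i)` is the `i`-th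
vertex of `W k`. -/
def concatStep (p : ℕ × ℕ) : ℕ × ℕ :=
  if p.2 + 1 < len p.1 then (p.1, p.2 + 1) else (p.1 + 1, 0)

def concatPos (n : ℕ) : ℕ × ℕ := (concatStep len)^[n] (0, 0)

def concatWalk (n : ℕ) : V := W (concatPos len n).1 (concatPos len n).2

variable {len W}

theorem concatPos_succ (n : ℕ) : concatPos len (n + 1) = concatStep len (concatPos len n) :=
  Function.iterate_succ_apply' _ _ _

theorem concatPos_snd_lt (hlen : ∀ k, 0 < len k) (n : ℕ) :
    (concatPos len n).2 < len (concatPos len n).1 := by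
  induction n with
  | zero => exact hlen 0
  | succ n ih =>
    rw [concatPos_succ, concatStep]
    split_ifs with h
    · exact h
    · exact hlen _

theorem concatPos_fst_le (n : ℕ) : (concatPos len n).1 ≤ n := by
  induction n with
  | zero => exact le_rfl
  | succ n ih =>
    rw [concatPos_succ, concatStep]
    split_ifs <;> dsimp only <;> omega

theorem concatPos_add {n k : ℕ} (hn : concatPos len n = (k, 0)) {i : ℕ} (hi : i < len k) :
    concatPos len (n + i) = (k, i) := by
  induction i with
  | zero => exact hn
  | succ i ih =>
    rw [← add_assoc, concatPos_succ, ih (by omega), concatStep, if_pos hi]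

theorem exists_concatPos_eq_zero (hlen : ∀ k, 0 < len k) (k : ℕ) :
    ∃ n, concatPos len n = (k, 0) := by
  induction k with
  | zero => exact ⟨0, rfl⟩
  | succ k ih =>
    obtain ⟨n, hn⟩ := ih
    have hk := hlen k
    refine ⟨n + (len k - 1) + 1, ?_⟩
    rw [concatPos_succ, concatPos_add hn (by omega), concatStep, if_neg (by dsimp only; omega)]

theorem exists_concatPos_eq (hlen : ∀ k, 0 < len k) (k : ℕ) {i : ℕ} (hi : i < len k) :
    ∃ n, concatPos len n = (k, i) := by
  obtain ⟨n, hn⟩ := exists_concatPos_eq_zero hlen k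
  exact ⟨n + i, concatPos_add hn hi⟩

theorem concatWalk_arrow {A : V → V → Prop} (hlen : ∀ k, 0 < len k)
    (hW : ∀ k, ∀ i < len k, A (W k i) (W k (i + 1))) (hjoin : ∀ k, W k (len k) = W (k + 1) 0)
    (n : ℕ) : A (concatWalk len W n) (concatWalk len W (n + 1)) := by
  have hlt := concatPos_snd_lt hlen n
  rw [concatWalk, concatWalk, concatPos_succ, concatStep]
  split_ifs with h
  · exact hW _ _ hlt
  · rw [← hjoin, ← show (concatPos len n).2 + 1 = len (concatPos len n).1 by omega]
    exact hW _ _ hlt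

theorem exists_concatWalk_eq (hlen : ∀ k, 0 < len k) (k : ℕ) {i : ℕ} (hi : i < len k) :
    ∃ n, k ≤ n ∧ concatWalk len W n = W k i := by
  obtain ⟨n, hn⟩ := exists_concatPos_eq hlen k hi
  exact ⟨n, by simpa [hn] using concatPos_fst_le (len := len) n, by simp [concatWalk, hn]⟩

theorem concatWalk_mem (hlen : ∀ k, 0 < len k) (n : ℕ) :
    ∃ k, ∃ i < len k, concatWalk len W n = W k i :=
  ⟨_, _, concatPos_snd_lt hlen n, rfl⟩

end Concat

theorem RayEquiv.symm {V : Type*} {r s : ℕ → V} (h : RayEquiv r s) : RayEquiv s r :=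
  let ⟨M, N, h⟩ := h
  ⟨N, M, fun i => (h i).symm⟩

/-- Distinct sets `X ≠ Y` give sets `spread X`, `spread Y` differing at arbitrarily large
numbers: `x ∈ X` is copied to every `Nat.pair x k`. -/
def spread (X : Set ℕ) : Set ℕ := {l | (Nat.unpair l).1 ∈ X}

theorem exists_le_mem_spread_notMem_spread {X Y : Set ℕ} {x : ℕ} (hX : x ∈ X) (hY : x ∉ Y)
    (M : ℕ) : ∃ l, M ≤ l ∧ l ∈ spread X ∧ l ∉ spread Y :=
  ⟨Nat.pair x M, Nat.right_le_pair x M, by simpa [spread] using hX, by simpa [spread] using hY⟩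

section Jump

variable {V : Type*} {A : V → V → Prop} {r : ℕ → V}

theorem IsRay.reflTransGen (hr : IsRay A r) {a b : ℕ} (hab : a ≤ b) :
    ReflTransGen A (r a) (r b) :=
  reflTransGen_of_walk (fun i _ => hr.2 i) hab le_rfl

theorem IsRay.transGen (hr : IsRay A r) {a b : ℕ} (hab : a < b) : TransGen A (r a) (r b) :=
  transGen_of_walk (fun i _ => hr.2 i) hab le_rfl

/-- Only the first inner vertex `q 1` is required to be off `r`: that is what tells apart rays
taking the jump from rays that do not. -/
structure Jump (A : V → V → Prop) (r : ℕ → V) where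
  s : ℕ
  t : ℕ
  len : ℕ
  q : ℕ → V
  s_lt_t : s < t
  one_lt_len : 1 < len
  q_zero : q 0 = r s
  q_len : q len = r t
  arrow : ∀ i < len, A (q i) (q (i + 1))
  q_one_notMem : q 1 ∉ Set.range r

theorem DAcyclic.exists_jump (hA : DAcyclic A) (hr : IsRay A r) {n : ℕ}
    (hb : HasBypassAt A r n) : ∃ J : Jump A r, n ≤ J.s := by
  classical
  obtain ⟨k, -, m, p, ⟨-, hp⟩, hp0, hpm, i, him, hoff⟩ := hb
  -- the jump starts at the last vertex of `p` on `r` before `p i`, and ends at `p m`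
  set a := Nat.findGreatest (fun j => p j ∈ Set.range r) i
  obtain ⟨u, hu⟩ : p a ∈ Set.range r :=
    Nat.findGreatest_spec (P := fun j => p j ∈ Set.range r) (Nat.zero_le i) ⟨n, hp0.symm⟩
  have hai : a < i := lt_of_le_of_ne (Nat.findGreatest_le i) fun h => hoff u (h ▸ hu.symm)
  have ha1 : p (a + 1) ∉ Set.range r := Nat.findGreatest_is_greatest (lt_add_one a) hai
  have hnu : n ≤ u := by
    by_contra! h
    refine hA.not_transGen_self (r u) ((hr.transGen h).trans_left ?_)
    simpa [hp0, hu] using reflTransGen_of_walk hp (Nat.zero_le a) (by omega)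
  have hut : u < n + k := by
    by_contra! h
    refine hA.not_transGen_self (r u) (TransGen.trans_left ?_ (hr.reflTransGen h))
    simpa [hpm, hu] using transGen_of_walk hp (show a < m by omega) le_rfl
  have ham : a + 1 < m := lt_of_le_of_ne (by omega) fun h => ha1 (h ▸ ⟨n + k, hpm.symm⟩)
  refine ⟨⟨u, n + k, m - a, fun j => p (a + j), hut, by omega, by simpa using hu.symm,
    by simpa [Nat.add_sub_cancel' (show a ≤ m by omega)] using hpm,
    fun j hj => hp (a + j) (by omega), ha1⟩, hnu⟩

def Jump.Ordered (J : ℕ → Jump A r) : Prop := ∀ l, (J l).t ≤ (J (l + 1)).s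

theorem DAcyclic.exists_jump_seq (hA : DAcyclic A) (hr : IsMultiray A r) :
    ∃ J : ℕ → Jump A r, Jump.Ordered J := by
  have hlate : ∀ N, ∃ J : Jump A r, N ≤ J.s := fun N => by
    obtain ⟨i, hi⟩ := hr.2 N
    obtain ⟨J, hJ⟩ := hA.exists_jump hr.1 hi
    exact ⟨J, by omega⟩
  choose F hF using hlate
  exact ⟨fun l => Nat.rec (F 0) (fun _ J => F J.t) l, fun l => hF _⟩

end Jump

namespace Jump

variable {V : Type*} {A : V → V → Prop} {r : ℕ → V} {J : ℕ → Jump A r}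

theorem t_le_s_of_lt (hJ : Ordered J) {l l' : ℕ} (h : l < l') :
    (J l).t ≤ (J l').s := by
  induction h with
  | refl => exact hJ l
  | step _ ih => exact ih.trans ((J _).s_lt_t.le.trans (hJ _))

theorem q_one_ne (hA : DAcyclic A) (hr : IsRay A r) (hJ : Ordered J)
    {l l' : ℕ} (hl : l ≠ l') {i : ℕ} (hi : i ≤ (J l').len) : (J l).q 1 ≠ (J l').q i := by
  intro h
  rcases Nat.lt_or_gt_of_ne hl with hlt | hlt
  · -- `q_l 1 → ⋯ → r t_l → ⋯ → r s_l' → ⋯ → q_l' i` closes a cycle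
    have h₁ := transGen_of_walk (J l).arrow (J l).one_lt_len le_rfl
    have h₂ := hr.reflTransGen (t_le_s_of_lt hJ hlt)
    have h₃ := reflTransGen_of_walk (J l').arrow (Nat.zero_le i) hi
    rw [(J l).q_len] at h₁
    rw [(J l').q_zero, ← h] at h₃
    exact hA.not_transGen_self _ ((h₁.trans_left h₂).trans_left h₃)
  · -- `q_l' i → ⋯ → r t_l' → ⋯ → r s_l → q_l 1` closes a cycle
    have h₁ := reflTransGen_of_walk (J l').arrow hi le_rfl
    have h₂ := hr.reflTransGen (t_le_s_of_lt hJ hlt)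
    have h₃ := transGen_of_walk (J l).arrow zero_lt_one (J l).one_lt_len.le
    rw [(J l').q_len] at h₁
    rw [(J l).q_zero, h] at h₃
    exact hA.not_transGen_self _ (TransGen.trans_right (h₁.trans h₂) h₃)

variable (J) (S : Set ℕ)

open Classical in
/-- The `l`-th block runs along `r` from `r (J l).s` to `r (J (l + 1)).s`, taking the detour
`(J l).q` exactly when `l ∈ S`. -/
noncomputable def blockLen (l : ℕ) : ℕ :=
  if l ∈ S then (J l).len + ((J (l + 1)).s - (J l).t) else (J (l + 1)).s - (J l).s

open Classical in
noncomputable def block (l i : ℕ) : V :=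
  if l ∈ S then
    if i ≤ (J l).len then (J l).q i else r ((J l).t + (i - (J l).len))
  else r ((J l).s + i)

noncomputable def detourRay : ℕ → V := concatWalk (blockLen J S) (block J S)

variable {J S}

theorem blockLen_pos (hJ : Ordered J) (l : ℕ) : 0 < blockLen J S l := by
  have := (J l).s_lt_t
  have := (J l).one_lt_len
  have := hJ l
  unfold blockLen
  split_ifs <;> omega

theorem block_of_mem_of_le_len {l i : ℕ} (hl : l ∈ S) (hi : i ≤ (J l).len) :
    block J S l i = (J l).q i := by
  simp [block, hl, hi]

theorem block_of_mem_of_len_le {l i : ℕ} (hl : l ∈ S) (hi : (J l).len ≤ i) :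
    block J S l i = r ((J l).t + (i - (J l).len)) := by
  unfold block
  rw [if_pos hl]
  split_ifs with h
  · rw [show i = (J l).len by omega, (J l).q_len, Nat.sub_self, add_zero]
  · rfl

theorem block_of_notMem {l : ℕ} (hl : l ∉ S) (i : ℕ) : block J S l i = r ((J l).s + i) := by
  simp [block, hl]

theorem block_arrow (hr : IsRay A r) (l : ℕ) :
    ∀ i < blockLen J S l, A (block J S l i) (block J S l (i + 1)) := by
  intro i _
  by_cases hl : l ∈ S
  · rcases Nat.lt_or_ge i (J l).len with hi | hi
    · rw [block_of_mem_of_le_len hl hi.le, block_of_mem_of_le_len hl hi]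
      exact (J l).arrow i hi
    · rw [block_of_mem_of_len_le hl hi, block_of_mem_of_len_le hl (by omega),
        show (J l).t + (i + 1 - (J l).len) = (J l).t + (i - (J l).len) + 1 by omega]
      exact hr.2 _
  · rw [block_of_notMem hl, block_of_notMem hl, ← add_assoc]
    exact hr.2 _

theorem block_blockLen (hJ : Ordered J) (l : ℕ) :
    block J S l (blockLen J S l) = block J S (l + 1) 0 := by
  have h₀ : block J S (l + 1) 0 = r (J (l + 1)).s := by
    by_cases hl : l + 1 ∈ S
    · rw [block_of_mem_of_le_len hl (Nat.zero_le _), (J (l + 1)).q_zero]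
    · rw [block_of_notMem hl, add_zero]
  have := (J l).s_lt_t
  have := hJ l
  rw [h₀]
  by_cases hl : l ∈ S
  · rw [block_of_mem_of_len_le hl (by simp [blockLen, hl])]
    simp only [blockLen, if_pos hl]
    congr 1
    omega
  · rw [block_of_notMem hl]
    simp only [blockLen, if_neg hl]
    congr 1
    omega

theorem block_mem_range_or_eq_q (l i : ℕ) :
    block J S l i ∈ Set.range r ∨ l ∈ S ∧ ∃ j ≤ (J l).len, block J S l i = (J l).q j := by
  unfold block
  split_ifs with hl hi
  · exact Or.inr ⟨hl, i, hi, rfl⟩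
  · exact Or.inl ⟨_, rfl⟩
  · exact Or.inl ⟨_, rfl⟩

theorem detourRay_isRay (hA : DAcyclic A) (hr : IsRay A r) (hJ : Ordered J) :
    IsRay A (detourRay J S) :=
  hA.isRay (concatWalk_arrow (blockLen_pos hJ) (block_arrow hr) (block_blockLen hJ))

theorem exists_detourRay_eq_q_one (hJ : Ordered J) {l : ℕ} (hl : l ∈ S) :
    ∃ n, l ≤ n ∧ detourRay J S n = (J l).q 1 := by
  have h1 : 1 < blockLen J S l := by
    have := (J l).one_lt_len
    simp only [blockLen, if_pos hl]
    omega
  rw [← block_of_mem_of_le_len hl (J l).one_lt_len.le]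
  exact exists_concatWalk_eq (blockLen_pos hJ) l h1

theorem detourRay_ne_q_one (hA : DAcyclic A) (hr : IsRay A r) (hJ : Ordered J)
    {l : ℕ} (hl : l ∉ S) (n : ℕ) : detourRay J S n ≠ (J l).q 1 := by
  obtain ⟨k, i, -, hn⟩ := concatWalk_mem (W := block J S) (blockLen_pos hJ) n
  rw [detourRay, hn]
  rcases block_mem_range_or_eq_q (S := S) k i with ⟨m, hm⟩ | ⟨hk, j, hj, hkj⟩
  · rw [← hm]
    exact fun h => (J l).q_one_notMem ⟨m, h⟩
  · rw [hkj]
    exact (q_one_ne hA hr hJ (show l ≠ k by rintro rfl; exact hl hk) hj).symm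

theorem not_rayEquiv_detourRay (hA : DAcyclic A) (hr : IsRay A r)
    (hJ : Ordered J) {T : Set ℕ} (hST : ∀ M, ∃ l, M ≤ l ∧ l ∈ S ∧ l ∉ T) :
    ¬ RayEquiv (detourRay J S) (detourRay J T) := by
  rintro ⟨M, N, h⟩
  obtain ⟨l, hMl, hlS, hlT⟩ := hST M
  obtain ⟨n, hln, hn⟩ := exists_detourRay_eq_q_one hJ hlS
  have := h (n - M)
  rw [Nat.add_sub_cancel' (by omega), hn] at this
  exact detourRay_ne_q_one hA hr hJ hlT _ this.symm

theorem not_rayEquiv_detourRay_spread (hA : DAcyclic A) (hr : IsRay A r) (hJ : Ordered J)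
    {X Y : Set ℕ} (hXY : X ≠ Y) :
    ¬ RayEquiv (detourRay J (spread X)) (detourRay J (spread Y)) := by
  obtain ⟨x, hx⟩ : ∃ x, ¬ (x ∈ X ↔ x ∈ Y) := by simpa [Set.ext_iff] using hXY
  by_cases hxX : x ∈ X
  · have hxY : x ∉ Y := fun hxY => hx (iff_of_true hxX hxY)
    exact not_rayEquiv_detourRay hA hr hJ (exists_le_mem_spread_notMem_spread hxX hxY)
  · have hxY : x ∈ Y := by tauto
    exact fun h =>
      not_rayEquiv_detourRay hA hr hJ (exists_le_mem_spread_notMem_spread hxY hxX) h.symm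

end Jump

theorem stmt1_general {V : Type*} (A : V → V → Prop)
    (hacyc : DAcyclic A) (r : ℕ → V) (hr : IsMultiray A r) :
    Cardinal.continuum ≤ Cardinal.mk (RayClasses A) := by
  obtain ⟨J, hJ⟩ := hacyc.exists_jump_seq hr
  let R : Set ℕ → ℕ → V := fun X => Jump.detourRay J (spread X)
  have hR : ∀ X, IsRay A (R X) := fun X => Jump.detourRay_isRay hacyc hr.1 hJ
  let cls : Set ℕ → RayClasses A := fun X => ⟨{s | IsRay A s ∧ RayEquiv (R X) s}, R X, hR X, rfl⟩
  have hcls : Function.Injective cls := by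
    intro X Y hXY
    by_contra hne
    have hY : R Y ∈ (cls X : Set (ℕ → V)) := by
      rw [hXY]
      exact ⟨hR Y, 0, 0, fun _ => rfl⟩
    exact Jump.not_rayEquiv_detourRay_spread hacyc hr.1 hJ hne hY.2
  simpa [Cardinal.mk_set_nat] using Cardinal.lift_mk_le_lift_mk_of_injective hcls

/-- If an acyclic digraph `D` contains a multiray, then the set of
equivalence classes of rays in `D` has cardinality at least `2^ℵ₀`. -/
theorem stmt1 {V : Type*} (A : V → V → Prop) (hirr : Irreflexive A)
    (hacyc : DAcyclic A) (r : ℕ → V) (hr : IsMultiray A r) :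
    Cardinal.continuum ≤ Cardinal.mk (RayClasses A) :=
  stmt1_general A hacyc r hr
end

section
/- Let P be a graded poset in which every element has degree at most 1 and every element of degree 1 covers exactly two distinct elements of degree 0 (the face poset of a 1-dimensional regular CW-complex), and let N be a Morse matching on P. Then no ray r = (r₀, r₁, …) in H_N(P) with deg(r₀) equal to the degree of r has a bypass. -/
/-- `P` is the face poset of a 1-dimensional regular CW-complex: every element
has degree at most 1 and every element of degree 1 covers exactly two distinct
elements of degree 0. -/
def OneDim {P : Type*} [PartialOrder P] (deg : P → ℕ) : Prop :=
  (∀ x : P, deg x ≤ 1) ∧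
  ∀ x : P, deg x = 1 → ∃ a b : P, a ≠ b ∧ deg a = 0 ∧ deg b = 0 ∧
    a ⋖ x ∧ b ⋖ x ∧ ∀ y : P, y ⋖ x → y = a ∨ y = b

/-! Along a ray starting in degree 0 the degrees alternate 0, 1, 0, 1, …: from a vertex the ray
leaves upwards along its matching edge, and from an edge it leaves downwards to the endpoint it
is not matched with. Since a vertex has at most one matching edge and an edge has exactly two
endpoints, every vertex of the ray has only one out-arrow in `H_N(P)`, namely the next vertex of
the ray. A directed path starting on the ray therefore never leaves it, so there is no bypass. -/

theorem not_hasBypassAt_of_forall_eq_succ {V : Type*} {A : V → V → Prop} {r : ℕ → V}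
    (hsucc : ∀ j z, A (r j) z → z = r (j + 1)) (n : ℕ) : ¬ HasBypassAt A r n := by
  rintro ⟨k, -, m, p, hp, hp0, -, i, him, hoff⟩
  have hon : ∀ i ≤ m, p i = r (n + i) := by
    intro i hi
    induction i with
    | zero => exact hp0
    | succ i ih =>
      have harrow := hp.2 i (by omega)
      rw [ih (by omega)] at harrow
      exact hsucc _ _ harrow
  exact hoff (n + i) (hon i him)

section Graded

variable {P : Type*} [PartialOrder P] {deg : P → ℕ}

theorem exists_isMaxChainIn_superset {x : P} {C : Set P} (hC : IsChainIn x C) :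
    ∃ D, C ⊆ D ∧ IsMaxChainIn x D := by
  have hchains : ∀ c ⊆ {E | IsChainIn x E}, IsChain (· ⊆ ·) c → c.Nonempty →
      ∃ ub ∈ {E | IsChainIn x E}, ∀ s ∈ c, s ⊆ ub := by
    intro c hc hchain _
    refine ⟨⋃₀ c, ⟨?_, ?_⟩, fun s hs => Set.subset_sUnion_of_mem hs⟩
    · rintro a ⟨s, hs, has⟩
      exact (hc hs).1 has
    · rintro a ⟨s, hs, has⟩ b ⟨t, ht, hbt⟩ hab
      rcases hchain.total hs ht with hst | hts
      · exact (hc ht).2 (hst has) hbt hab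
      · exact (hc hs).2 has (hts hbt) hab
  obtain ⟨D, hCD, hD⟩ := zorn_subset_nonempty {E | IsChainIn x E} hchains C hC
  exact ⟨D, hCD, hD.1, fun E hE hDE => subset_antisymm hDE (hD.2 hE hDE)⟩

theorem GradedDeg.deg_lt_deg (hg : GradedDeg deg) {x y : P} (hxy : x < y) : deg x < deg y := by
  have hx : IsChainIn x ∅ := ⟨Set.empty_subset _, IsChain.empty⟩
  obtain ⟨D, -, hD⟩ := exists_isMaxChainIn_superset hx
  obtain ⟨hDfin, hDcard⟩ := hg x D hD
  have hyD : y ∉ D := fun hy => hxy.not_ge (hD.1.1 hy)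
  have hDy : ∀ a ∈ D, a ≤ y := fun a ha => (hD.1.1 ha).trans hxy.le
  have hy : IsChainIn y (insert y D) :=
    ⟨Set.insert_subset le_rfl hDy, hD.1.2.insert fun b hb _ => Or.inr (hDy b hb)⟩
  obtain ⟨E, hDE, hE⟩ := exists_isMaxChainIn_superset hy
  obtain ⟨hEfin, hEcard⟩ := hg y E hE
  have := Set.ncard_le_ncard hDE hEfin
  rw [Set.ncard_insert_of_notMem hyD hDfin] at this
  omega

theorem IsMatching.fst_eq_of_mem_s8 {M : Set (P × P)} (hM : IsMatching M) {a b x : P}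
    (ha : (a, x) ∈ M) (hb : (b, x) ∈ M) : a = b := by
  by_contra hab
  exact (hM.2 _ ha _ hb fun h => hab (congrArg Prod.fst h)).2.2.2 rfl

theorem OneDim.eq_of_covBy (h1 : OneDim deg) {x u v w : P} (hx : deg x = 1)
    (hu : u ⋖ x) (hv : v ⋖ x) (hw : w ⋖ x) (huw : u ≠ w) (hvw : v ≠ w) : u = v := by
  obtain ⟨a, b, -, -, -, -, -, hab⟩ := h1.2 x hx
  rcases hab u hu with rfl | rfl <;> rcases hab v hv with rfl | rfl <;>
    rcases hab w hw with rfl | rfl <;> simp_all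

variable {M : Set (P × P)}

theorem GradedDeg.hasseM_of_deg_eq_zero (hg : GradedDeg deg) {x y : P} (hx : deg x = 0)
    (hxy : HasseM M x y) : (y, x) ∈ M := by
  rcases hxy with ⟨hyx, -⟩ | hyx
  · exact absurd (hg.deg_lt_deg hyx.lt) (by omega)
  · exact hyx

theorem OneDim.hasseM_of_deg_eq_one (hg : GradedDeg deg) (h1 : OneDim deg) (hM : IsMatching M)
    {x y : P} (hx : deg x = 1) (hxy : HasseM M x y) : y ⋖ x ∧ (x, y) ∉ M := by
  rcases hxy with hyx | hyx
  · exact hyx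
  · have hxy : x ⋖ y := hM.1 _ hyx
    have := hg.deg_lt_deg hxy.lt
    have := h1.1 y
    omega

theorem OneDim.deg_add_deg_of_hasseM (hg : GradedDeg deg) (h1 : OneDim deg) (hM : IsMatching M)
    {x y : P} (hxy : HasseM M x y) : deg x + deg y = 1 := by
  have hlt : deg y < deg x ∨ deg x < deg y := by
    rcases hxy with ⟨hyx, -⟩ | hyx
    · exact Or.inl (hg.deg_lt_deg hyx.lt)
    · have hxy : x ⋖ y := hM.1 _ hyx
      exact Or.inr (hg.deg_lt_deg hxy.lt)
  have := h1.1 x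
  have := h1.1 y
  omega

variable {r : ℕ → P}

theorem OneDim.deg_ray_eq_mod_two (hg : GradedDeg deg) (h1 : OneDim deg) (hM : IsMatching M)
    (hr : ∀ j, HasseM M (r j) (r (j + 1))) (hd : deg (r 0) = rayDeg deg r) (j : ℕ) :
    deg (r j) = j % 2 := by
  have hstep j := h1.deg_add_deg_of_hasseM hg hM (hr j)
  have hr0 : deg (r 0) = 0 := by
    have hmin : rayDeg deg r ≤ deg (r 1) := Nat.sInf_le ⟨1, rfl⟩
    have := hstep 0
    rw [zero_add] at this
    omega
  induction j with
  | zero => exact hr0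
  | succ j ih =>
    have := hstep j
    omega

theorem OneDim.eq_succ_of_hasseM_ray (hg : GradedDeg deg) (h1 : OneDim deg) (hM : IsMatching M)
    (hr : ∀ j, HasseM M (r j) (r (j + 1))) (hd : deg (r 0) = rayDeg deg r) (j : ℕ) (z : P)
    (hz : HasseM M (r j) z) : z = r (j + 1) := by
  have hdeg := h1.deg_ray_eq_mod_two hg hM hr hd
  rcases Nat.even_or_odd j with ⟨i, rfl⟩ | ⟨i, rfl⟩
  · have h0 : deg (r (i + i)) = 0 := by rw [hdeg]; omega
    exact hM.fst_eq_of_mem_s8 (hg.hasseM_of_deg_eq_zero h0 hz) (hg.hasseM_of_deg_eq_zero h0 (hr _))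
  · have h0 : deg (r (2 * i)) = 0 := by rw [hdeg]; omega
    have hedge : deg (r (2 * i + 1)) = 1 := by rw [hdeg]; omega
    have hmatched := hg.hasseM_of_deg_eq_zero h0 (hr (2 * i))
    obtain ⟨hzc, hzM⟩ := h1.hasseM_of_deg_eq_one hg hM hedge hz
    obtain ⟨hsc, hsM⟩ := h1.hasseM_of_deg_eq_one hg hM hedge (hr _)
    exact h1.eq_of_covBy hedge hzc hsc (hM.1 _ hmatched)
      (by rintro rfl; exact hzM hmatched) fun h => hsM (h ▸ hmatched)

end Graded

/-- on the face poset of a 1-dimensional regular CW-complex, no ray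
`r` of a Morse matching `N` with `deg (r 0)` equal to the degree of `r` has a
bypass. -/
theorem stmt8 {P : Type*} [PartialOrder P] (deg : P → ℕ) (hgraded : GradedDeg deg)
    (h1 : OneDim deg) (N : Set (P × P)) (hN : IsMorse N) (r : ℕ → P)
    (hr : IsRay (HasseM N) r) (hd : deg (r 0) = rayDeg deg r) :
    ∀ n : ℕ, ¬ HasBypassAt (HasseM N) r n :=
  not_hasBypassAt_of_forall_eq_succ (h1.eq_succ_of_hasseM_ray hgraded hN.1 hr.2 hd)
end

section
/- Let M be a Morse matching on a graded poset P and let r = (r₀, r₁, r₂, …) be a ray in H_M(P). Set i₀ = min{i : deg(r_j) = i for some j ∈ ℕ} and j₀ = min{j : deg(r_j) = i₀}. Then for every j ≥ j₀ the degree of r_j is either i₀ or i₀ + 1. -/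
/-!
Every arrow of `H_M(P)` changes the degree by one: it goes down along a cover, or up along a
matching edge. Past `j₀` the ray can never drop below `i₀`, and it can rise to `i₀ + 1` only
along a matching edge. Its endpoint is then already matched, so the next arrow cannot be another
matching edge and has to go back down to `i₀`.
-/

section Poset

variable {P : Type*} [PartialOrder P]

theorem exists_isMaxChainIn (x : P) : ∃ C : Set P, IsMaxChainIn x C := by
  have hchains : ∀ cs ⊆ {C : Set P | IsChainIn x C}, IsChain (· ⊆ ·) cs → cs.Nonempty →
      ∃ ub ∈ {C : Set P | IsChainIn x C}, ∀ s ∈ cs, s ⊆ ub := by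
    rintro cs hcs hchain -
    refine ⟨⋃₀ cs, ⟨Set.sUnion_subset fun s hs => (hcs hs).1, ?_⟩,
      fun _ => Set.subset_sUnion_of_mem⟩
    rintro a ⟨s, hs, has⟩ b ⟨t, ht, hbt⟩ hab
    obtain rfl | hst := eq_or_ne s t
    · exact (hcs hs).2 has hbt hab
    rcases hchain hs ht hst with hst | hts
    · exact (hcs ht).2 (hst has) hbt hab
    · exact (hcs hs).2 has (hts hbt) hab
  obtain ⟨C, -, hC⟩ := zorn_subset_nonempty _ hchains ∅ ⟨Set.empty_subset _, IsChain.empty⟩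
  exact ⟨C, hC.prop, fun D hD hCD => hC.eq_of_subset hD hCD⟩

theorem IsMaxChainIn.mem_of_forall_comparable {x a : P} {C : Set P} (hC : IsMaxChainIn x C)
    (ha : a ≤ x) (hcomp : ∀ b ∈ C, a ≤ b ∨ b ≤ a) : a ∈ C :=
  have hD : IsChainIn x (insert a C) :=
    ⟨Set.insert_subset ha hC.1.1, hC.1.2.insert fun b hb _ => hcomp b hb⟩
  (hC.2 _ hD (Set.subset_insert a C)) ▸ Set.mem_insert a C

theorem IsMaxChainIn.self_mem {x : P} {C : Set P} (hC : IsMaxChainIn x C) : x ∈ C :=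
  hC.mem_of_forall_comparable le_rfl fun _ hb => Or.inr (hC.1.1 hb)

theorem IsMaxChainIn.insert_of_covBy {x y : P} {C : Set P} (hC : IsMaxChainIn y C)
    (h : y ⋖ x) : IsMaxChainIn x (insert x C) := by
  refine ⟨⟨Set.insert_subset le_rfl fun c hc => (hC.1.1 hc).trans h.le,
    hC.1.2.insert fun c hc _ => Or.inr ((hC.1.1 hc).trans h.le)⟩, fun D hD hCD => ?_⟩
  refine hCD.antisymm fun d hd => ?_
  obtain rfl | hdx := eq_or_ne d x
  · exact Set.mem_insert d C
  have hdy : d ≤ y := by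
    obtain rfl | hdy := eq_or_ne d y
    · exact le_rfl
    refine (hD.2 hd (hCD (Set.mem_insert_of_mem x hC.self_mem)) hdy).resolve_right fun hyd => ?_
    exact h.2 (lt_of_le_of_ne hyd (Ne.symm hdy)) (lt_of_le_of_ne (hD.1 hd) hdx)
  refine Set.mem_insert_of_mem x (hC.mem_of_forall_comparable hdy fun c hc => ?_)
  obtain rfl | hdc := eq_or_ne d c
  · exact Or.inl le_rfl
  exact hD.2 hd (hCD (Set.mem_insert_of_mem x hc)) hdc

theorem GradedDeg.deg_eq_succ_of_covBy {deg : P → ℕ} (hgraded : GradedDeg deg) {x y : P}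
    (h : y ⋖ x) : deg x = deg y + 1 := by
  obtain ⟨C, hC⟩ := exists_isMaxChainIn y
  have hxC : x ∉ C := fun hx => h.lt.not_ge (hC.1.1 hx)
  obtain ⟨hfin, hcard⟩ := hgraded y C hC
  have hcard_insert := (hgraded x _ (hC.insert_of_covBy h)).2
  rw [Set.ncard_insert_of_notMem hxC hfin, hcard] at hcard_insert
  omega

theorem IsMatching.notMem_of_mem {M : Set (P × P)} (hM : IsMatching M) {a b c : P}
    (h : (b, a) ∈ M) : (c, b) ∉ M := by
  intro h'
  by_cases he : ((b, a) : P × P) = (c, b)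
  · obtain ⟨rfl, rfl⟩ := Prod.mk.inj he
    exact lt_irrefl _ (hM.1 _ h).lt
  · exact (hM.2 _ h _ h' he).2.1 rfl

theorem GradedDeg.deg_of_hasseM {deg : P → ℕ} (hgraded : GradedDeg deg) {M : Set (P × P)}
    (hM : IsMatching M) {x y : P} (h : HasseM M x y) :
    deg x = deg y + 1 ∨ (deg y = deg x + 1 ∧ (y, x) ∈ M) := by
  rcases h with ⟨hcov, -⟩ | hup
  · exact Or.inl (hgraded.deg_eq_succ_of_covBy hcov)
  · exact Or.inr ⟨hgraded.deg_eq_succ_of_covBy (hM.1 _ hup), hup⟩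

theorem GradedDeg.deg_eq_or_matched_succ_of_forall_le {deg : P → ℕ} (hgraded : GradedDeg deg)
    {M : Set (P × P)} (hM : IsMatching M) {r : ℕ → P} (hstep : ∀ j, HasseM M (r j) (r (j + 1)))
    {i₀ j₀ : ℕ} (hmin : ∀ j, i₀ ≤ deg (r j)) (hj₀ : deg (r j₀) = i₀) :
    ∀ j, j₀ ≤ j → deg (r j) = i₀ ∨ (deg (r j) = i₀ + 1 ∧ ∃ y, (r j, y) ∈ M) := by
  intro j hj
  induction j, hj using Nat.le_induction with
  | base => exact Or.inl hj₀
  | succ j _ ih =>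
    rcases hgraded.deg_of_hasseM hM (hstep j) with hdown | ⟨hup, hmem⟩
    · have hmin_succ := hmin (j + 1)
      rcases ih with h | ⟨h, -⟩
      · omega
      · exact Or.inl (by omega)
    · rcases ih with h | ⟨-, y, hy⟩
      · exact Or.inr ⟨by omega, r j, hmem⟩
      · exact (hM.notMem_of_mem hy hmem).elim

end Poset

theorem rayDeg_le {P : Type*} (deg : P → ℕ) (r : ℕ → P) (j : ℕ) : rayDeg deg r ≤ deg (r j) :=
  Nat.sInf_le ⟨j, rfl⟩

theorem exists_deg_eq_rayDeg {P : Type*} (deg : P → ℕ) (r : ℕ → P) :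
    ∃ j, deg (r j) = rayDeg deg r :=
  Nat.sInf_mem (s := {i | ∃ j, deg (r j) = i}) ⟨_, 0, rfl⟩

/-- along a ray `r` of a Morse matching, from the first index `j₀`
where the minimal degree `i₀` is attained onwards, every element has degree `i₀`
or `i₀ + 1`. -/
theorem stmt10 {P : Type*} [PartialOrder P] (deg : P → ℕ) (hgraded : GradedDeg deg)
    (M : Set (P × P)) (hM : IsMorse M) (r : ℕ → P) (hr : IsRay (HasseM M) r) :
    ∀ j : ℕ, sInf {j' : ℕ | deg (r j') = sInf {i : ℕ | ∃ k : ℕ, deg (r k) = i}} ≤ j →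
      deg (r j) = sInf {i : ℕ | ∃ k : ℕ, deg (r k) = i} ∨
      deg (r j) = sInf {i : ℕ | ∃ k : ℕ, deg (r k) = i} + 1 := by
  change ∀ j, sInf {j' | deg (r j') = rayDeg deg r} ≤ j →
    deg (r j) = rayDeg deg r ∨ deg (r j) = rayDeg deg r + 1
  intro j hj
  have hj₀ : deg (r (sInf {j' | deg (r j') = rayDeg deg r})) = rayDeg deg r :=
    Nat.sInf_mem (exists_deg_eq_rayDeg deg r)
  exact (hgraded.deg_eq_or_matched_succ_of_forall_le hM.1 hr.2 (rayDeg_le deg r) hj₀ j hj).imp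
    id And.left
end
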